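/- arXiv:2108.09842 — 3 statements merged into one kernel-verified Lean document; each statement's English description precedes it below -/
import Mathlib

section
/- Let f be a real polynomial in the two variables x, y that is homogeneous of degree n. Then the polynomial identity (n−1)·(f_xx·f_y² − 2·f_xy·f_x·f_y + f_yy·f_x²) = n·(f_xx·f_yy − f_xy²)·f holds, where subscripts denote partial derivatives. Equivalently, the Hessian quadratic form of f evaluated on the direction (−f_y, f_x) tangent to the level sets of f equals n/(n−1) times the determinant of the Hessian of f times f. -/
/-!
Differentiating Euler's identity `x f_x + y f_y = n f` gives `x f_xx + y f_xy = (n - 1) f_x` and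
`x f_xy + y f_yy = (n - 1) f_y`. Using these to replace one factor `(n - 1) f_x` or `(n - 1) f_y` in
each term of `(n - 1) (f_xx f_y² - 2 f_xy f_x f_y + f_yy f_x²)` collapses it to
`(f_xx f_yy - f_xy²) (x f_x + y f_y) = n (f_xx f_yy - f_xy²) f`.
-/

open MvPolynomial

namespace MvPolynomial

variable {R σ : Type*} [CommRing R]

theorem pderiv_comm (i j : σ) (p : MvPolynomial σ R) :
    pderiv i (pderiv j p) = pderiv j (pderiv i p) := by
  classical
  have hcomm : ⁅pderiv i, pderiv j⁆ = (0 : Derivation R (MvPolynomial σ R) (MvPolynomial σ R)) :=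
    derivation_ext fun k => by
      rw [Derivation.commutator_apply, pderiv_X, pderiv_X, Pi.single_apply, Pi.single_apply]
      split_ifs <;> simp
  have hp := congrArg (· p) hcomm
  rw [Derivation.commutator_apply] at hp
  exact sub_eq_zero.1 hp

variable [Fintype σ] {n : ℕ} {φ : MvPolynomial σ R}

theorem IsHomogeneous.sum_X_mul_pderiv_pderiv (h : φ.IsHomogeneous n) (i : σ) :
    ∑ j, X j * pderiv j (pderiv i φ) = ((n : MvPolynomial σ R) - 1) * pderiv i φ := by
  classical
  have euler := congrArg (pderiv i) h.sum_X_mul_pderiv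
  simp only [map_sum, pderiv_mul, pderiv_X, Pi.single_apply, ite_mul, one_mul, zero_mul,
    Finset.sum_add_distrib, Finset.sum_ite_eq', Finset.mem_univ, if_true, nsmul_eq_mul,
    Derivation.map_natCast, zero_add, pderiv_comm i] at euler
  linear_combination euler

end MvPolynomial

/-- Euler-type identity for homogeneous polynomials: the Hessian quadratic form
evaluated on the level-set tangent direction `(−f_y, f_x)` equals
`n/(n−1)` times the Hessian determinant times `f`. -/
theorem umbilic_hessian_identity (n : ℕ) (f : MvPolynomial (Fin 2) ℝ)
    (hf : f.IsHomogeneous n) :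
    C ((n : ℝ) - 1) *
      (pderiv (0 : Fin 2) (pderiv (0 : Fin 2) f) * (pderiv (1 : Fin 2) f) ^ 2
        - 2 * pderiv (1 : Fin 2) (pderiv (0 : Fin 2) f) * pderiv (0 : Fin 2) f
            * pderiv (1 : Fin 2) f
        + pderiv (1 : Fin 2) (pderiv (1 : Fin 2) f) * (pderiv (0 : Fin 2) f) ^ 2)
    = C (n : ℝ) *
        (pderiv (0 : Fin 2) (pderiv (0 : Fin 2) f)
            * pderiv (1 : Fin 2) (pderiv (1 : Fin 2) f)
          - (pderiv (1 : Fin 2) (pderiv (0 : Fin 2) f)) ^ 2) * f := by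
  have euler := hf.sum_X_mul_pderiv
  have euler_x := hf.sum_X_mul_pderiv_pderiv 0
  have euler_y := hf.sum_X_mul_pderiv_pderiv 1
  simp only [Fin.sum_univ_two, nsmul_eq_mul] at euler euler_x euler_y
  rw [pderiv_comm 0 1] at euler_y
  rw [map_sub, map_one, map_natCast]
  linear_combination
    (pderiv 1 (pderiv 0 f) * pderiv 1 f - pderiv 1 (pderiv 1 f) * pderiv 0 f) * euler_x
    + (pderiv 1 (pderiv 0 f) * pderiv 0 f - pderiv 0 (pderiv 0 f) * pderiv 1 f) * euler_y
    + (pderiv 0 (pderiv 0 f) * pderiv 1 (pderiv 1 f) - pderiv 1 (pderiv 0 f) ^ 2) * euler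
end

section
/- Let f be a real polynomial in two variables, homogeneous of degree n ≥ 2, and suppose the polynomial Q(f) = f_xx·f_y² − 2·f_xy·f_x·f_y + f_yy·f_x² is not identically zero. Then the set U = {θ ∈ [0, 2π) : Q(f)(cos θ, sin θ) = 0} of umbilic points at infinity of the graph of f is finite, its cardinality is even, and its cardinality is at most 6n − 8. -/
open MvPolynomial Real

/-- `Q(f) = f_xx·f_y² − 2·f_xy·f_x·f_y + f_yy·f_x²`, the Hessian of `f` evaluated
on the tangent direction to the level sets of `f`. -/
noncomputable def Qf (f : MvPolynomial (Fin 2) ℝ) : MvPolynomial (Fin 2) ℝ :=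
  pderiv (0 : Fin 2) (pderiv (0 : Fin 2) f) * (pderiv (1 : Fin 2) f) ^ 2
    - 2 * pderiv (1 : Fin 2) (pderiv (0 : Fin 2) f) * pderiv (0 : Fin 2) f
        * pderiv (1 : Fin 2) f
    + pderiv (1 : Fin 2) (pderiv (1 : Fin 2) f) * (pderiv (0 : Fin 2) f) ^ 2

/-!
`Q(f)` is a binary form of degree `d = 3n - 4`, so `Q(-v) = (-1)^d Q(v)` and its zeros on the
circle are invariant under `θ ↦ θ + π`: the zeros in `[0, 2π)` are those in `[0, π)` together
with their translates by `π`, so there are twice as many. Writing `Q(x, y) = y^d p(x / y)` with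
`p = Q(·, 1)`, the zeros in `(0, π)` are sent injectively by `cot` to roots of `p`, and `θ = 0` is a
zero exactly when the coefficient of `x^d` in `p` vanishes, i.e. when `deg p < d`. Hence `[0, π)`
holds at most `d` zeros and `[0, 2π)` at most `2d = 6n - 8`.
-/

open Set

theorem MvPolynomial.IsHomogeneous.eval_smul {σ R : Type*} [CommSemiring R]
    {φ : MvPolynomial σ R} {n : ℕ} (hφ : φ.IsHomogeneous n) (c : R) (x : σ → R) :
    eval (c • x) φ = c ^ n * eval x φ := by
  rw [φ.as_sum, map_sum, map_sum, Finset.mul_sum]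
  refine Finset.sum_congr rfl fun m hm => ?_
  have hdeg : ∑ i ∈ m.support, m i = n := by
    simpa [Finsupp.weight_apply, Finsupp.sum] using hφ (mem_support_iff.mp hm)
  simp only [eval_monomial, Finsupp.prod, Pi.smul_apply, smul_eq_mul, mul_pow,
    Finset.prod_mul_distrib, Finset.prod_pow_eq_pow_sum, hdeg]
  ring

theorem MvPolynomial.IsHomogeneous.natDegree_aeval_X_one_le {R : Type*} [CommSemiring R]
    {φ : MvPolynomial (Fin 2) R} {n : ℕ} (hφ : φ.IsHomogeneous n) :
    (MvPolynomial.aeval ![(Polynomial.X : Polynomial R), 1] φ).natDegree ≤ n := by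
  rw [φ.as_sum, map_sum]
  refine Polynomial.natDegree_sum_le_of_forall_le _ _ fun m hm => ?_
  have hdeg : m 0 + m 1 = n := by
    simpa [Finsupp.weight_apply, Finsupp.sum_fintype, Fin.sum_univ_two]
      using hφ (mem_support_iff.mp hm)
  rw [aeval_monomial, Finsupp.prod_fintype _ _ (fun _ => pow_zero _), Fin.prod_univ_two]
  simp only [Matrix.cons_val_zero, Matrix.cons_val_one, one_pow, mul_one]
  exact (Polynomial.natDegree_C_mul_X_pow_le _ _).trans (by omega)

theorem Polynomial.eval_one_zero_homogenize {R : Type*} [CommSemiring R] (p : Polynomial R)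
    (n : ℕ) : MvPolynomial.eval ![1, 0] (p.homogenize n) = p.coeff n := by
  induction p using Polynomial.induction_on' with
  | add p q hp hq => simp [homogenize_add, hp, hq]
  | monomial k c =>
    rcases lt_trichotomy k n with hkn | rfl | hnk
    · rw [homogenize_monomial hkn.le, coeff_monomial, if_neg hkn.ne]
      simp [MvPolynomial.eval_monomial, Finsupp.prod_fintype, Nat.sub_ne_zero_of_lt hkn]
    · simp [MvPolynomial.eval_monomial, Finsupp.prod_fintype]
    · rw [homogenize_monomial_of_lt hnk, coeff_monomial, if_neg hnk.ne', map_zero]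

theorem Real.injOn_cot : InjOn cot (Ioo 0 π) := by
  intro a ⟨ha0, haπ⟩ b ⟨hb0, hbπ⟩ hab
  have hsa := (sin_pos_of_pos_of_lt_pi ha0 haπ).ne'
  have hsb := (sin_pos_of_pos_of_lt_pi hb0 hbπ).ne'
  rw [cot_eq_cos_div_sin, cot_eq_cos_div_sin, div_eq_div_iff hsa hsb] at hab
  have hsin : sin (b - a) = 0 := by rw [sin_sub]; linarith
  rw [sin_eq_zero_iff_of_lt_of_lt (by linarith) (by linarith)] at hsin
  linarith

theorem isHomogeneous_Qf {f : MvPolynomial (Fin 2) ℝ} {n : ℕ} (hf : f.IsHomogeneous n) :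
    (Qf f).IsHomogeneous (3 * n - 4) := by
  have hx := hf.pderiv (i := 0)
  have hy := hf.pderiv (i := 1)
  have htwo : (2 : MvPolynomial (Fin 2) ℝ).IsHomogeneous 0 := by
    rw [← map_ofNat C 2]; exact isHomogeneous_C _ _
  have h₁ := hx.pderiv (i := 0) |>.mul (hy.pow 2)
  have h₂ := htwo.mul (hx.pderiv (i := 1)) |>.mul hx |>.mul hy
  have h₃ := hy.pderiv (i := 1) |>.mul (hx.pow 2)
  rw [show n - 1 - 1 + (n - 1) * 2 = 3 * n - 4 by omega] at h₁ h₃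
  rw [show 0 + (n - 1 - 1) + (n - 1) + (n - 1) = 3 * n - 4 by omega] at h₂
  exact (h₁.sub h₂).add h₃

def circleZeros (Q : MvPolynomial (Fin 2) ℝ) : Set ℝ :=
  {θ | eval ![cos θ, sin θ] Q = 0}

theorem add_pi_mem_circleZeros_iff {Q : MvPolynomial (Fin 2) ℝ} {d : ℕ}
    (hQ : Q.IsHomogeneous d) (θ : ℝ) : θ + π ∈ circleZeros Q ↔ θ ∈ circleZeros Q := by
  have hneg : ![cos (θ + π), sin (θ + π)] = (-1 : ℝ) • ![cos θ, sin θ] := by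
    ext i; fin_cases i <;> simp [cos_add_pi, sin_add_pi]
  change eval _ Q = 0 ↔ eval _ Q = 0
  rw [hneg, hQ.eval_smul, mul_eq_zero, or_iff_right (pow_ne_zero _ (by norm_num))]

theorem encard_Ico_two_mul_inter {S : Set ℝ} {a : ℝ} (ha : 0 ≤ a)
    (hS : ∀ x, x + a ∈ S ↔ x ∈ S) :
    (Ico 0 (2 * a) ∩ S).encard = 2 * (Ico 0 a ∩ S).encard := by
  have hshift : (· + a) '' (Ico 0 a ∩ S) = Ico a (2 * a) ∩ S := by
    rw [image_inter (add_left_injective a), image_add_const_Ico, zero_add, ← two_mul]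
    congr 1
    ext x
    exact ⟨by rintro ⟨y, hy, rfl⟩; exact (hS y).2 hy,
      fun hx => ⟨x - a, (hS _).1 (by rwa [sub_add_cancel]), sub_add_cancel x a⟩⟩
  have hsplit : Ico 0 (2 * a) ∩ S = (Ico 0 a ∩ S) ∪ (Ico a (2 * a) ∩ S) := by
    rw [← union_inter_distrib_right, Ico_union_Ico_eq_Ico ha (by linarith)]
  rw [hsplit, encard_union_eq, ← hshift, (add_left_injective a).encard_image, two_mul]
  exact (Ico_disjoint_Ico_same).mono inter_subset_left inter_subset_left

theorem zero_mem_circleZeros_homogenize_iff (p : Polynomial ℝ) (d : ℕ) :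
    0 ∈ circleZeros (p.homogenize d) ↔ p.coeff d = 0 := by
  simp [circleZeros, Polynomial.eval_one_zero_homogenize]

theorem encard_Ioo_zero_pi_inter_circleZeros_homogenize_le {p : Polynomial ℝ} {d : ℕ}
    (hp : p ≠ 0) (hpd : p.natDegree ≤ d) :
    (Ioo 0 π ∩ circleZeros (p.homogenize d)).encard ≤ p.natDegree := by
  have hroot : MapsTo cot (Ioo 0 π ∩ circleZeros (p.homogenize d)) (p.rootSet ℝ) := by
    rintro θ ⟨hθ, hzero⟩
    have hsin : sin θ ≠ 0 := (sin_pos_of_pos_of_lt_pi hθ.1 hθ.2).ne'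
    change eval _ _ = 0 at hzero
    rw [Polynomial.eval_homogenize hpd _ (by simpa using hsin)] at hzero
    simpa [Polynomial.mem_rootSet, hp, cot_eq_cos_div_sin, hsin] using hzero
  calc _ = (cot '' (Ioo 0 π ∩ circleZeros (p.homogenize d))).encard :=
        (Real.injOn_cot.mono inter_subset_left).encard_image.symm
    _ ≤ (p.rootSet ℝ).encard := encard_le_encard hroot.image_subset
    _ ≤ p.natDegree := by
        rw [← (p.rootSet_finite ℝ).cast_ncard_eq]
        exact_mod_cast p.ncard_rootSet_le ℝ

theorem encard_Ico_zero_pi_inter_circleZeros_homogenize_le {p : Polynomial ℝ} {d : ℕ}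
    (hp : p ≠ 0) (hpd : p.natDegree ≤ d) :
    (Ico 0 π ∩ circleZeros (p.homogenize d)).encard ≤ d := by
  have hIoo := encard_Ioo_zero_pi_inter_circleZeros_homogenize_le hp hpd
  have hsub : Ico 0 π ∩ circleZeros (p.homogenize d) ⊆
      insert 0 (Ioo 0 π ∩ circleZeros (p.homogenize d)) := by
    rintro θ ⟨⟨h0, hπ⟩, hθ⟩
    rcases h0.eq_or_lt with rfl | h0
    · exact mem_insert _ _
    · exact mem_insert_of_mem _ ⟨⟨h0, hπ⟩, hθ⟩
  by_cases hzero : 0 ∈ circleZeros (p.homogenize d)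
  · have hlt : p.natDegree < d := by
      refine hpd.lt_of_ne fun h => hp ?_
      rw [← Polynomial.leadingCoeff_eq_zero, Polynomial.leadingCoeff, h,
        ← zero_mem_circleZeros_homogenize_iff]
      exact hzero
    calc _ ≤ _ := encard_le_encard hsub
      _ ≤ _ := encard_insert_le _ _
      _ ≤ (p.natDegree : ℕ∞) + 1 := by gcongr
      _ ≤ d := by exact_mod_cast hlt
  · calc _ ≤ (Ioo 0 π ∩ circleZeros (p.homogenize d)).encard :=
          encard_le_encard fun θ hθ =>
            (hsub hθ).resolve_left (by rintro rfl; exact hzero hθ.2)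
      _ ≤ d := hIoo.trans (by exact_mod_cast hpd)

theorem encard_Ico_zero_pi_inter_circleZeros_le {Q : MvPolynomial (Fin 2) ℝ} {d : ℕ}
    (hQ : Q.IsHomogeneous d) (hQ0 : Q ≠ 0) :
    (Ico 0 π ∩ circleZeros Q).encard ≤ d := by
  have hpd := hQ.natDegree_aeval_X_one_le
  rw [← Polynomial.homogenize_eq_of_isHomogeneous hQ rfl] at hQ0 ⊢
  rw [Ne, Polynomial.homogenize_eq_zero_iff hpd] at hQ0
  exact encard_Ico_zero_pi_inter_circleZeros_homogenize_le hQ0 hpd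

theorem umbilics_at_infinity_finite_even_general (n : ℕ)
    (f : MvPolynomial (Fin 2) ℝ) (hf : f.IsHomogeneous n) (hQ : Qf f ≠ 0) :
    ({θ : ℝ | θ ∈ Set.Ico 0 (2 * π) ∧
        eval ![Real.cos θ, Real.sin θ] (Qf f) = 0}).Finite ∧
    Even ({θ : ℝ | θ ∈ Set.Ico 0 (2 * π) ∧
        eval ![Real.cos θ, Real.sin θ] (Qf f) = 0}).ncard ∧
    ({θ : ℝ | θ ∈ Set.Ico 0 (2 * π) ∧
        eval ![Real.cos θ, Real.sin θ] (Qf f) = 0}).ncard ≤ 6 * n - 8 := by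
  have hQf := isHomogeneous_Qf hf
  change (Ico 0 (2 * π) ∩ circleZeros (Qf f)).Finite ∧
    Even (Ico 0 (2 * π) ∩ circleZeros (Qf f)).ncard ∧
    (Ico 0 (2 * π) ∩ circleZeros (Qf f)).ncard ≤ 6 * n - 8
  obtain ⟨hVfin, hVcard⟩ :=
    encard_le_coe_iff_finite_ncard_le.mp (encard_Ico_zero_pi_inter_circleZeros_le hQf hQ)
  have hU : (Ico 0 (2 * π) ∩ circleZeros (Qf f)).encard =
      (2 * (Ico 0 π ∩ circleZeros (Qf f)).ncard : ℕ) := by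
    rw [encard_Ico_two_mul_inter pi_pos.le (add_pi_mem_circleZeros_iff hQf),
      ← hVfin.cast_ncard_eq]
    norm_cast
  have hUcard : (Ico 0 (2 * π) ∩ circleZeros (Qf f)).ncard =
      2 * (Ico 0 π ∩ circleZeros (Qf f)).ncard := by
    rw [ncard_def, hU, ENat.toNat_natCast]
  exact ⟨finite_of_encard_eq_coe hU, ⟨_, hUcard.trans (two_mul _)⟩, by omega⟩

/-- The graph of a homogeneous polynomial of degree `n ≥ 2` (with `Q(f)` not
identically zero) has a finite, even number of umbilic points at infinity,
and no more than `6n − 8` of them. -/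
theorem umbilics_at_infinity_finite_even (n : ℕ) (hn : 2 ≤ n)
    (f : MvPolynomial (Fin 2) ℝ) (hf : f.IsHomogeneous n) (hQ : Qf f ≠ 0) :
    ({θ : ℝ | θ ∈ Set.Ico 0 (2 * π) ∧
        eval ![Real.cos θ, Real.sin θ] (Qf f) = 0}).Finite ∧
    Even ({θ : ℝ | θ ∈ Set.Ico 0 (2 * π) ∧
        eval ![Real.cos θ, Real.sin θ] (Qf f) = 0}).ncard ∧
    ({θ : ℝ | θ ∈ Set.Ico 0 (2 * π) ∧
        eval ![Real.cos θ, Real.sin θ] (Qf f) = 0}).ncard ≤ 6 * n - 8 :=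
  umbilics_at_infinity_finite_even_general n f hf hQ
end

section
/- Let a, b be nonzero real numbers and let f(x,y) = x²/a + y²/b. If ab > 0 then Q(f)(cos θ, sin θ) ≠ 0 for every θ, so the elliptic paraboloid z = f(x,y) has no umbilic points at infinity; if ab < 0 then the set {θ ∈ [0, 2π) : Q(f)(cos θ, sin θ) = 0} has exactly four elements, so the hyperbolic paraboloid has exactly four umbilic points at infinity. -/
/-!
Since `parab a b` is quadratic, `Q(parab a b)(x, y) = 8 (b x² + a y²) / (a² b²)`. When `ab > 0`,
`b x² + a y²` has no zero on the unit circle because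
`(b x² + a y²)(a x² + b y²) = ab (x² + y²)² + ((a - b) x y)²`. When `ab < 0`, the equation
`b cos² θ + a sin² θ = 0` becomes `cos 2θ = (a + b) / (a - b)`, whose right-hand side lies strictly
between `-1` and `1`; such an equation has exactly four solutions `θ ∈ [0, 2π)`.
-/

open MvPolynomial Real

/-- The polynomial `x²/a + y²/b` defining the paraboloid. -/
noncomputable def parab (a b : ℝ) : MvPolynomial (Fin 2) ℝ :=
  C (1 / a) * X 0 ^ 2 + C (1 / b) * X 1 ^ 2

theorem eval_Qf_parab_eq_zero_iff {a b : ℝ} (ha : a ≠ 0) (hb : b ≠ 0) (x y : ℝ) :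
    eval ![x, y] (Qf (parab a b)) = 0 ↔ b * x ^ 2 + a * y ^ 2 = 0 := by
  have hQ : eval ![x, y] (Qf (parab a b)) = 8 / (a ^ 2 * b ^ 2) * (b * x ^ 2 + a * y ^ 2) := by
    simp only [Qf, parab, one_div, pow_two, map_add, map_mul, Derivation.leibniz, pderiv_X,
      derivation_C, Pi.single_eq_same, Pi.single_eq_of_ne, one_ne_zero, zero_ne_one, ne_eq,
      not_false_eq_true, smul_eq_mul, mul_one, mul_zero, zero_mul, add_zero, zero_add, sub_zero,
      eval_C, eval_X, map_one, Matrix.cons_val_one, Matrix.cons_val_fin_one, Matrix.cons_val_zero]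
    field_simp
    ring
  rw [hQ, mul_eq_zero, or_iff_right (by positivity)]

theorem mul_sq_add_mul_sq_ne_zero {a b x y : ℝ} (hab : 0 < a * b) (hxy : x ^ 2 + y ^ 2 = 1) :
    b * x ^ 2 + a * y ^ 2 ≠ 0 := by
  have key : (b * x ^ 2 + a * y ^ 2) * (a * x ^ 2 + b * y ^ 2) =
      a * b * (x ^ 2 + y ^ 2) ^ 2 + ((a - b) * x * y) ^ 2 := by
    ring
  have hpos : 0 < (b * x ^ 2 + a * y ^ 2) * (a * x ^ 2 + b * y ^ 2) := by
    rw [key, hxy]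
    positivity
  exact left_ne_zero_of_mul hpos.ne'

theorem mul_cos_sq_add_mul_sin_sq_eq_zero_iff {a b : ℝ} (hab : a ≠ b) (θ : ℝ) :
    b * cos θ ^ 2 + a * sin θ ^ 2 = 0 ↔ cos (2 * θ) = (a + b) / (a - b) := by
  rw [eq_div_iff (sub_ne_zero.mpr hab), cos_sq', cos_two_mul, cos_sq']
  constructor <;> intro h <;> linarith

theorem abs_add_div_sub_lt_one {a b : ℝ} (hab : a * b < 0) : |(a + b) / (a - b)| < 1 := by
  have hab' : 0 < |a - b| := abs_pos.mpr fun h => by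
    rw [sub_eq_zero.mp h] at hab
    nlinarith [sq_nonneg b]
  rw [abs_div, div_lt_one hab', ← sq_lt_sq]
  nlinarith

theorem setOf_cos_two_mul_eq_cos_two_mul {m : ℝ} (hm₀ : 0 < m) (hm : m < π / 2) :
    {θ : ℝ | θ ∈ Set.Ico 0 (2 * π) ∧ cos (2 * θ) = cos (2 * m)} =
      {m, π - m, π + m, 2 * π - m} := by
  have hπ := pi_pos
  ext θ
  simp only [Set.mem_ofPred_eq, Set.mem_Ico, cos_eq_cos_iff, Set.mem_insert_iff,
    Set.mem_singleton_iff]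
  constructor
  · rintro ⟨⟨h₀, h₂π⟩, n, hn | hn⟩
    · have hn₁ : n < 1 := by exact_mod_cast (by nlinarith : (n : ℝ) < 1)
      have hn₂ : -2 < n := by exact_mod_cast (by nlinarith : (-2 : ℝ) < n)
      interval_cases n <;> push_cast at hn
      · right; right; left; linarith
      · left; linarith
    · have hn₁ : 0 < n := by exact_mod_cast (by nlinarith : (0 : ℝ) < n)
      have hn₂ : n < 3 := by exact_mod_cast (by nlinarith : (n : ℝ) < 3)
      interval_cases n <;> push_cast at hn
      · right; left; linarith
      · right; right; right; linarith
  · rintro (rfl | rfl | rfl | rfl) <;> refine ⟨⟨by linarith, by linarith⟩, ?_⟩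
    exacts [⟨0, .inl (by push_cast; ring)⟩, ⟨1, .inr (by push_cast; ring)⟩,
      ⟨-1, .inl (by push_cast; ring)⟩, ⟨2, .inr (by push_cast; ring)⟩]

theorem ncard_setOf_cos_two_mul_eq {k : ℝ} (hk : |k| < 1) :
    {θ : ℝ | θ ∈ Set.Ico 0 (2 * π) ∧ cos (2 * θ) = k}.ncard = 4 := by
  obtain ⟨hk₁, hk₂⟩ := abs_lt.mp hk
  have hπ := pi_pos
  have h₀ : 0 < arccos k / 2 := by linarith [arccos_pos.mpr hk₂]
  have h₁ : arccos k / 2 < π / 2 := by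
    linarith [(arccos_le_pi k).lt_of_ne (mt arccos_eq_pi.mp (by linarith))]
  have hcos : cos (2 * (arccos k / 2)) = k := by
    rw [mul_div_cancel₀ _ two_ne_zero, cos_arccos hk₁.le hk₂.le]
  rw [← hcos, setOf_cos_two_mul_eq_cos_two_mul h₀ h₁, Set.ncard_eq_four]
  exact ⟨_, _, _, _, by linarith, by linarith, by linarith, by linarith, by linarith,
    by linarith, rfl⟩

/-- The elliptic paraboloid (`ab > 0`) has no umbilic points at infinity, while
the hyperbolic paraboloid (`ab < 0`) has exactly four umbilic points at infinity. -/
theorem paraboloid_umbilics_at_infinity (a b : ℝ) (ha : a ≠ 0) (hb : b ≠ 0) :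
    (0 < a * b →
      ∀ θ : ℝ, eval ![Real.cos θ, Real.sin θ] (Qf (parab a b)) ≠ 0) ∧
    (a * b < 0 →
      ({θ : ℝ | θ ∈ Set.Ico 0 (2 * π) ∧
          eval ![Real.cos θ, Real.sin θ] (Qf (parab a b)) = 0}).ncard = 4) := by
  refine ⟨fun hab θ => ?_, fun hab => ?_⟩
  · rw [Ne, eval_Qf_parab_eq_zero_iff ha hb]
    exact mul_sq_add_mul_sq_ne_zero hab (cos_sq_add_sin_sq θ)
  · have hne : a ≠ b := by
      rintro rfl
      nlinarith [sq_nonneg a]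
    simp_rw [eval_Qf_parab_eq_zero_iff ha hb, mul_cos_sq_add_mul_sin_sq_eq_zero_iff hne]
    exact ncard_setOf_cos_two_mul_eq (abs_add_div_sub_lt_one hab)
end
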